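/- Every morphism of the category Lens that is both an epimorphism and a monomorphism is an isomorphism. -/

import Mathlib

universe u

open CategoryTheory CategoryTheory.Limits

namespace LensPaper

section OutDefs

variable {A : Type*} [Category A] {B : Type*} [Category B] {C : Type*} [Category C]

/-- The "out-set" of an object: the collection of all morphisms out of `X`,
bundled with their targets. -/
def Out (X : A) : Type _ := Σ Y : A, X ⟶ Y

/-- The identity element of an out-set. -/
def Out.id (X : A) : Out X := ⟨X, 𝟙 X⟩

/-- Composition of a morphism out of `X` with a morphism out of its target. -/
def Out.comp {X : A} (u : Out X) (v : Out u.1) : Out X := ⟨v.1, u.2 ≫ v.2⟩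

/-- Transport of out-sets along an equality of objects. -/
def Out.cast {X Y : A} (h : X = Y) (u : Out X) : Out Y := ⟨u.1, eqToHom h.symm ≫ u.2⟩

@[simp] theorem Out.cast_rfl {X : A} (u : Out X) : Out.cast rfl u = u := by
  cases u; simp [Out.cast]; rfl

theorem Out.cast_cast {X Y Z : A} (h₁ : X = Y) (h₂ : Y = Z) (u : Out X) :
    Out.cast h₂ (Out.cast h₁ u) = Out.cast (h₁.trans h₂) u := by
  subst h₁; subst h₂; simp

/-- The action of a functor on out-sets. -/
def mapOut (F : A ⥤ B) {X : A} (u : Out X) : Out (F.obj X) := ⟨F.obj u.1, F.map u.2⟩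

theorem mapOut_cast (F : A ⥤ B) {X Y : A} (h : X = Y) (u : Out X) :
    mapOut F (Out.cast h u) = Out.cast (congrArg F.obj h) (mapOut F u) := by
  subst h; simp

/-- The set of all morphisms of a category, bundled with their endpoints. -/
def Mor (A : Type*) [Category A] : Type _ := Σ (X Y : A), X ⟶ Y

/-- The action of a functor on morphisms, as a function on bundled morphisms. -/
def mapMor (F : A ⥤ B) : Mor A → Mor B := fun m => ⟨F.obj m.1, F.obj m.2.1, F.map m.2.2⟩

/-- The set of composable pairs of morphisms of a category. -/
def CompPair (A : Type*) [Category A] : Type _ := Σ (X Y Z : A), (X ⟶ Y) × (Y ⟶ Z)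

/-- The action of a functor on composable pairs. -/
def mapCompPair (F : A ⥤ B) : CompPair A → CompPair B :=
  fun p => ⟨F.obj p.1, F.obj p.2.1, F.obj p.2.2.1, (F.map p.2.2.2.1, F.map p.2.2.2.2)⟩

/-- A functor is a discrete opfibration if every morphism out of `F.obj X`
has a unique lift to a morphism out of `X`. -/
def IsDiscreteOpfibration (F : A ⥤ B) : Prop :=
  ∀ (X : A) (u : Out (F.obj X)), ∃! v : Out X, mapOut F v = u

/-- A cosieve is an injective-on-objects discrete opfibration. -/
def IsCosieve (F : A ⥤ B) : Prop :=
  IsDiscreteOpfibration F ∧ Function.Injective F.obj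

end OutDefs

/-- An (asymmetric delta) lens: a get functor together with put functions
satisfying PutGet, PutId and PutPut. -/
structure DLens (A : Type*) (B : Type*) [Category A] [Category B] where
  get : A ⥤ B
  put : ∀ (X : A), Out (get.obj X) → Out X
  putGet : ∀ (X : A) (u : Out (get.obj X)), mapOut get (put X u) = u
  putId : ∀ (X : A), put X (Out.id (get.obj X)) = Out.id X
  putPut : ∀ (X : A) (u : Out (get.obj X)) (v : Out u.1) (h : u.1 = get.obj (put X u).1),
      put X (u.comp v) = (put X u).comp (put (put X u).1 (Out.cast h v))

namespace DLens

variable {A : Type*} [Category A] {B : Type*} [Category B] {C : Type*} [Category C]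

theorem put_cast (F : DLens A B) {X₁ X₂ : A} (e : X₁ = X₂) (u : Out (F.get.obj X₁)) :
    Out.cast e (F.put X₁ u) = F.put X₂ (Out.cast (congrArg F.get.obj e) u) := by
  subst e; simp

/-- The identity lens. -/
def id (A : Type*) [Category A] : DLens A A where
  get := Functor.id A
  put X u := u
  putGet X u := rfl
  putId X := rfl
  putPut X u v h := by
    have hv : Out.cast h v = v := Out.cast_rfl v
    rw [hv]

/-- Composition of lenses. -/
def comp (F : DLens A B) (G : DLens B C) : DLens A C where
  get := F.get ⋙ G.get
  put X u := F.put X (G.put (F.get.obj X) u)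
  putGet X u := by
    show mapOut G.get (mapOut F.get (F.put X (G.put (F.get.obj X) u))) = u
    rw [F.putGet, G.putGet]
  putId X := by
    show F.put X (G.put (F.get.obj X) (Out.id (G.get.obj (F.get.obj X)))) = Out.id X
    rw [G.putId, F.putId]
  putPut X u v h := by
    have h₁ : u.1 = G.get.obj (G.put (F.get.obj X) u).1 :=
      (congrArg Sigma.fst (G.putGet (F.get.obj X) u)).symm
    show F.put X (G.put (F.get.obj X) (u.comp v)) = _
    rw [G.putPut (F.get.obj X) u v h₁]
    have h₂ : (G.put (F.get.obj X) u).1 =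
        F.get.obj (F.put X (G.put (F.get.obj X) u)).1 :=
      (congrArg Sigma.fst (F.putGet X (G.put (F.get.obj X) u))).symm
    rw [F.putPut X (G.put (F.get.obj X) u) _ h₂]
    rw [put_cast G h₂, Out.cast_cast]

end DLens

/-- The category of small categories and (asymmetric delta) lenses. -/
def LensCat : Type (u + 1) := Cat.{u, u}

/-- Regard a small category as an object of the category of lenses. -/
def LensCat.of (C : Cat.{u, u}) : LensCat.{u} := C

/-- The underlying small category of an object of the category of lenses. -/
def LensCat.toCat (A : LensCat.{u}) : Cat.{u, u} := A

instance : Category.{u} LensCat.{u} where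
  Hom A B := DLens A.toCat B.toCat
  id A := DLens.id A.toCat
  comp F G := F.comp G
  id_comp F := rfl
  comp_id F := rfl
  assoc F G H := rfl

/-- The get functor of a lens, i.e. a morphism of `LensCat` regarded as a `DLens`. -/
def LensCat.get {A B : LensCat.{u}} (F : A ⟶ B) : A.toCat ⟶ B.toCat := (DLens.get F).toCatHom

/-- The identity-on-objects forgetful functor from the category of lenses to the
category of small categories and functors, sending a lens to its get functor. -/
def lensForget : LensCat.{u} ⥤ Cat.{u, u} where
  obj A := A.toCat
  map F := (DLens.get F).toCatHom
  map_id A := rfl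
  map_comp F G := rfl

end LensPaper
open CategoryTheory CategoryTheory.Limits LensPaper

/-!
Test a mono lens `F : A → B` against the two projections out of the category of pairs of objects
of `A` with equal images, made into lenses by lifting a morphism out of one component to the other
with the put of `F`. They agree after `F`, so they are equal, which makes the get functor of `F`
injective on objects and faithful; by PutGet it is then full as well. By PutGet the image of the
get functor is closed under outgoing morphisms, so two copies of `B` can be glued along it, and
testing an epi lens against the two inclusions shows that the get functor is surjective on
objects. Finally, the strict inverse of a get functor that is an isomorphism of categories becomes
an inverse lens by pushing morphisms forward along `F`.
-/

namespace LensPaper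

section Out

variable {A : Type*} [Category A] {B : Type*} [Category B]

theorem Out.ext {X : A} {u v : Out X} (h₁ : u.1 = v.1) (h₂ : u.2 ≫ eqToHom h₁ = v.2) :
    u = v := by
  obtain ⟨Y, f⟩ := u
  obtain ⟨Z, g⟩ := v
  dsimp only at h₁
  subst h₁
  simp only [eqToHom_refl, Category.comp_id] at h₂
  rw [h₂]

theorem Out.snd_comp_eqToHom {X : A} {u v : Out X} (h : u = v) :
    u.2 ≫ eqToHom (congrArg Sigma.fst h) = v.2 := by
  subst h; simp

theorem Out.cast_id {X Y : A} (h : X = Y) : Out.cast h (Out.id X) = Out.id Y := by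
  subst h; simp

theorem mapOut_id (F : A ⥤ B) (X : A) : mapOut F (Out.id X) = Out.id (F.obj X) :=
  Out.ext rfl (by simp [mapOut, Out.id])

theorem mapOut_comp (F : A ⥤ B) {X : A} (u : Out X) (v : Out u.1) :
    mapOut F (u.comp v) = (mapOut F u).comp (mapOut F v) :=
  Out.ext rfl (by simp [mapOut, Out.comp])

theorem mapOut_mapOut_of_comp_eq_id {F : A ⥤ B} {G : B ⥤ A} (h : F ⋙ G = 𝟭 A) {X : A}
    (u : Out X) : mapOut G (mapOut F u) = Out.cast (Functor.congr_obj h X).symm u := by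
  have key (H : A ⥤ A) (hH : H = 𝟭 A) :
      mapOut H u = Out.cast (Functor.congr_obj hH X).symm u := by
    subst hH
    exact (Out.cast_rfl u).symm
  exact key _ h

end Out

namespace DLens

variable {A : Type*} [Category A] {B : Type*} [Category B]

theorem ext {F G : DLens A B} (hget : F.get = G.get)
    (hput : ∀ X u, F.put X u = G.put X (Out.cast (Functor.congr_obj hget X) u)) : F = G := by
  obtain ⟨get, put, _, _, _⟩ := F
  obtain ⟨get', put', _, _, _⟩ := G
  dsimp only at hget
  subst hget
  obtain rfl : put = put' := funext₂ fun X u => by simpa using hput X u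
  rfl

theorem eq_id_of_get_eq_id {F : DLens A A} (h : F.get = 𝟭 A) : F = DLens.id A := by
  obtain ⟨get, put, putGet, _, _⟩ := F
  dsimp only at h
  subst h
  obtain rfl : put = fun _ u => u := funext₂ putGet
  rfl

/-- PutId and PutPut hold for any put that pushes morphisms forward along a functor `π` with
`G ⋙ π` the identity on objects; only PutGet has to be checked. -/
def ofSection (G : A ⥤ B) (π : B ⥤ A) (hπ : ∀ X, π.obj (G.obj X) = X)
    (putGet : ∀ X (u : Out (G.obj X)), mapOut G (Out.cast (hπ X) (mapOut π u)) = u) :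
    DLens A B where
  get := G
  put X u := Out.cast (hπ X) (mapOut π u)
  putGet := putGet
  putId X := by rw [mapOut_id, Out.cast_id]
  putPut X u v h := Out.ext rfl (by simp [Out.cast, Out.comp, mapOut, eqToHom_map])

theorem full_get (F : DLens A B) (hinj : Function.Injective F.get.obj) : F.get.Full where
  map_surjective {X Y} g := by
    have hw := F.putGet X ⟨F.get.obj Y, g⟩
    rcases hput : F.put X ⟨F.get.obj Y, g⟩ with ⟨Y', a⟩
    rw [hput] at hw
    obtain ⟨hY, ha⟩ := Sigma.mk.inj_iff.mp hw
    obtain rfl := hinj hY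
    exact ⟨a, eq_of_heq ha⟩

theorem mem_range_get_obj_of_hom (F : DLens A B) {b b' : B} (f : b ⟶ b')
    (hb : b ∈ Set.range F.get.obj) : b' ∈ Set.range F.get.obj := by
  obtain ⟨X, rfl⟩ := hb
  exact ⟨(F.put X ⟨b', f⟩).1, congrArg Sigma.fst (F.putGet X ⟨b', f⟩)⟩

end DLens

theorem LensCat.isIso_of_isIso_get {A B : LensCat.{u}} (F : A ⟶ B) [(DLens.get F).IsIso] :
    IsIso F := by
  let e := (DLens.get F).asIsomorphism
  have hFG : DLens.get F ⋙ e.inverse = 𝟭 _ := e.unit_eq.symm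
  have hGF : e.inverse ⋙ DLens.get F = 𝟭 _ := e.counit_eq
  let R : B ⟶ A := DLens.ofSection e.inverse (DLens.get F) (Functor.congr_obj hGF) fun _ u => by
    rw [mapOut_cast, mapOut_mapOut_of_comp_eq_id hFG, Out.cast_cast]
    exact Out.cast_rfl u
  exact ⟨R, DLens.eq_id_of_get_eq_id hFG, DLens.eq_id_of_get_eq_id hGF⟩

structure FiberPair {A : Type*} [Category A] {B : Type*} [Category B] (F : A ⥤ B) where
  fst : A
  snd : A
  obj_eq : F.obj fst = F.obj snd

namespace FiberPair

section

variable {A : Type*} [Category A] {B : Type*} [Category B] {F : A ⥤ B}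

@[ext]
structure Hom (p q : FiberPair F) where
  fst : p.fst ⟶ q.fst
  snd : p.snd ⟶ q.snd
  map_eq : F.map fst = eqToHom p.obj_eq ≫ F.map snd ≫ eqToHom q.obj_eq.symm

instance : Category (FiberPair F) where
  Hom := Hom
  id p := ⟨𝟙 _, 𝟙 _, by simp⟩
  comp f g := ⟨f.fst ≫ g.fst, f.snd ≫ g.snd, by
    rw [Functor.map_comp, Functor.map_comp, f.map_eq, g.map_eq]; simp⟩

variable (F)

abbrev fstFunctor : FiberPair F ⥤ A where
  obj p := p.fst
  map f := Hom.fst f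

abbrev sndFunctor : FiberPair F ⥤ A where
  obj p := p.snd
  map f := Hom.snd f

abbrev swap : FiberPair F ⥤ FiberPair F where
  obj p := ⟨p.snd, p.fst, p.obj_eq.symm⟩
  map f := ⟨Hom.snd f, Hom.fst f, by rw [Hom.map_eq f]; simp⟩

theorem fstFunctor_comp_eq : fstFunctor F ⋙ F = sndFunctor F ⋙ F :=
  CategoryTheory.Functor.ext (fun p => p.obj_eq) fun _ _ f => f.map_eq

def swapLens : DLens (FiberPair F) (FiberPair F) where
  get := swap F
  put _ u := mapOut (swap F) u
  putGet _ _ := rfl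
  putId _ := mapOut_id _ _
  putPut _ u v _ := (mapOut_comp _ _ _).trans
    (congrArg (fun w => (mapOut (swap F) u).comp (mapOut (swap F) w)) (Out.cast_rfl v).symm)

variable {F}

def outMk {p : FiberPair F} (a : Out p.fst) (b : Out p.snd)
    (h : mapOut F b = Out.cast p.obj_eq (mapOut F a)) : Out p :=
  ⟨⟨a.1, b.1, (congrArg Sigma.fst h).symm⟩, ⟨a.2, b.2, by
    have h₂ := Out.snd_comp_eqToHom h
    simp only [Out.cast, mapOut] at h₂
    rw [h₂]
    simp⟩⟩

theorem out_ext {p : FiberPair F} {w w' : Out p}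
    (h₁ : mapOut (fstFunctor F) w = mapOut (fstFunctor F) w')
    (h₂ : mapOut (sndFunctor F) w = mapOut (sndFunctor F) w') : w = w' := by
  obtain ⟨⟨X, Y, _⟩, f⟩ := w
  obtain ⟨⟨X', Y', _⟩, f'⟩ := w'
  obtain ⟨rfl, hf₁⟩ := Sigma.mk.inj_iff.mp h₁
  obtain ⟨rfl, hf₂⟩ := Sigma.mk.inj_iff.mp h₂
  obtain rfl : f = f' := Hom.ext (eq_of_heq hf₁) (eq_of_heq hf₂)
  rfl

end

variable {A : Type*} [Category A] {B : Type*} [Category B] (F : DLens A B)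

def liftSnd (p : FiberPair F.get) (a : Out p.fst) : Out p.snd :=
  F.put p.snd (Out.cast p.obj_eq (mapOut F.get a))

theorem mapOut_liftSnd (p : FiberPair F.get) (a : Out p.fst) :
    mapOut F.get (liftSnd F p a) = Out.cast p.obj_eq (mapOut F.get a) :=
  F.putGet _ _

theorem liftSnd_id (p : FiberPair F.get) : liftSnd F p (Out.id p.fst) = Out.id p.snd := by
  rw [liftSnd, mapOut_id, Out.cast_id, F.putId]

theorem liftSnd_comp (p : FiberPair F.get) (a : Out p.fst) (v : Out a.1) :
    liftSnd F p (a.comp v) =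
      (liftSnd F p a).comp
        (liftSnd F ⟨a.1, (liftSnd F p a).1, (congrArg Sigma.fst (mapOut_liftSnd F p a)).symm⟩
          v) :=
  have h : Out.cast p.obj_eq (mapOut F.get (a.comp v)) =
      (Out.cast p.obj_eq (mapOut F.get a)).comp (mapOut F.get v) :=
    Out.ext rfl (by simp [Out.cast, Out.comp, mapOut])
  (congrArg (F.put p.snd) h).trans (F.putPut _ _ _ _)

def fstLens : DLens (FiberPair F.get) A where
  get := fstFunctor F.get
  put p a := outMk a (liftSnd F p a) (mapOut_liftSnd F p a)
  putGet _ _ := rfl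
  putId p := out_ext rfl (liftSnd_id F p)
  putPut p a v h := by
    have hv : Out.cast h v = v := Out.cast_rfl v
    refine out_ext ((mapOut_comp _ _ _).trans ?_).symm ((mapOut_comp _ _ _).trans ?_).symm
    · exact congrArg a.comp hv
    · exact (congrArg (fun w => (liftSnd F p a).comp (liftSnd F _ w)) hv).trans
        (liftSnd_comp F p a v).symm

theorem fstLens_comp_eq : (fstLens F).comp F = ((swapLens F.get).comp (fstLens F)).comp F := by
  refine DLens.ext (fstFunctor_comp_eq F.get) fun p (u : Out (F.get.obj p.fst)) => ?_
  refine out_ext ?_ ?_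
  · show F.put p.fst u = liftSnd F (swap F.get |>.obj p) (F.put p.snd (Out.cast p.obj_eq u))
    rw [liftSnd, F.putGet, Out.cast_cast]
    exact congrArg _ (Out.cast_rfl u).symm
  · show liftSnd F p (F.put p.fst u) = F.put p.snd (Out.cast p.obj_eq u)
    rw [liftSnd, F.putGet]

end FiberPair

section Mono

open FiberPair

variable {A B : LensCat.{u}} (F : A ⟶ B) [Mono F]

theorem fstFunctor_eq_sndFunctor_of_mono : fstFunctor (DLens.get F) = sndFunctor (DLens.get F) :=
  congrArg DLens.get <| Mono.right_cancellation (Z := LensCat.of (Cat.of (FiberPair _)))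
    (fstLens F) ((swapLens _).comp (fstLens F)) (fstLens_comp_eq F)

theorem injective_get_obj_of_mono : Function.Injective (DLens.get F).obj :=
  fun X X' h => Functor.congr_obj (fstFunctor_eq_sndFunctor_of_mono F) ⟨X, X', h⟩

theorem faithful_get_of_mono : (DLens.get F).Faithful where
  map_injective {X Y} a a' h := by
    let f : (⟨X, X, rfl⟩ : FiberPair (DLens.get F)) ⟶ ⟨Y, Y, rfl⟩ :=
      ⟨a, a', by simpa using h⟩
    simpa using Functor.congr_hom (fstFunctor_eq_sndFunctor_of_mono F) f

end Mono

section

variable {A : Type*} [Category A] {B : Type*} [Category B] (F : DLens A B)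

/-- Two copies of `B` glued along the image of `F`: an object `⟨b, P, _⟩` lies in the second
copy when `P` holds, which is only allowed outside the image. Morphisms may leave the second copy,
but only into the image. -/
@[ext]
structure Glue where
  base : B
  second : Prop
  notMem_range : second → base ∉ Set.range F.get.obj

namespace Glue

variable {F}

def HomOk (x y : Glue F) : Prop :=
  (y.second → x.second) ∧ (x.second → ¬y.second → y.base ∈ Set.range F.get.obj)

instance : Category (Glue F) where
  Hom x y := {f : x.base ⟶ y.base // HomOk x y}
  id x := ⟨𝟙 _, id, fun h hn => (hn h).elim⟩
  comp {x y z} f g := ⟨f.1 ≫ g.1, fun hz => f.2.1 (g.2.1 hz), fun hx hz => by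
    by_cases hy : y.second
    · exact g.2.2 hy hz
    · exact F.mem_range_get_obj_of_hom g.1 (f.2.2 hx hy)⟩

@[simp]
theorem comp_val {x y z : Glue F} (f : x ⟶ y) (g : y ⟶ z) : (f ≫ g).1 = f.1 ≫ g.1 := rfl

@[simp]
theorem eqToHom_val {x y : Glue F} (h : x = y) : (eqToHom h).1 = eqToHom (congrArg base h) := by
  subst h; rfl

variable (F)

abbrev baseFunctor : Glue F ⥤ B where
  obj := base
  map f := f.1

abbrev incl₁ : B ⥤ Glue F where
  obj b := ⟨b, False, False.elim⟩
  map f := ⟨f, False.elim, False.elim⟩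

abbrev incl₂ : B ⥤ Glue F where
  obj b := ⟨b, b ∉ Set.range F.get.obj, id⟩
  map f := ⟨f, fun hb' hb => hb' (F.mem_range_get_obj_of_hom f hb), fun _ hb' => not_not.mp hb'⟩

theorem notMem_range_iff_second {b : B} {y : Glue F} (f : (incl₂ F).obj b ⟶ y) :
    y.base ∉ Set.range F.get.obj ↔ y.second :=
  ⟨fun hy => by_contra fun hy' =>
    hy (f.2.2 (fun hb => hy (F.mem_range_get_obj_of_hom f.1 hb)) hy'), y.notMem_range⟩

variable {F} in
theorem out_ext {x : Glue F} {u v : Out x} (h₁ : u.1.second ↔ v.1.second)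
    (h₂ : mapOut (baseFunctor F) u = mapOut (baseFunctor F) v) : u = v := by
  obtain ⟨⟨b, P, _⟩, f⟩ := u
  obtain ⟨⟨b', P', _⟩, f'⟩ := v
  obtain ⟨rfl, hf⟩ := Sigma.mk.inj_iff.mp h₂
  obtain rfl : P = P' := propext h₁
  obtain rfl : f = f' := Subtype.ext (eq_of_heq hf)
  rfl

def inclLens₁ : DLens B (Glue F) :=
  DLens.ofSection (incl₁ F) (baseFunctor F) (fun _ => rfl) fun _ u =>
    out_ext ⟨False.elim, u.2.2.1⟩ (Out.cast_rfl (mapOut (baseFunctor F) u))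

def inclLens₂ : DLens B (Glue F) :=
  DLens.ofSection (incl₂ F) (baseFunctor F) (fun _ => rfl) fun _ u =>
    out_ext (notMem_range_iff_second F u.2) (Out.cast_rfl (mapOut (baseFunctor F) u))

theorem comp_inclLens₁_eq_comp_inclLens₂ : F.comp (inclLens₁ F) = F.comp (inclLens₂ F) := by
  have hget : F.get ⋙ incl₁ F = F.get ⋙ incl₂ F :=
    CategoryTheory.Functor.ext
      (fun X => Glue.ext rfl (propext ⟨False.elim, fun h => h ⟨X, rfl⟩⟩))
      fun _ _ _ => Subtype.ext (by simp)
  refine DLens.ext hget fun X (u : Out ((incl₁ F).obj (F.get.obj X))) => congrArg (F.put X) ?_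
  show Out.cast rfl (mapOut (baseFunctor F) u) =
    Out.cast rfl (mapOut (baseFunctor F) (Out.cast (Functor.congr_obj hget X) u))
  rw [mapOut_cast, Out.cast_cast]

end Glue

end

open Glue in
theorem surjective_get_obj_of_epi {A B : LensCat.{u}} (F : A ⟶ B) [Epi F] :
    Function.Surjective (DLens.get F).obj := by
  intro b
  by_contra hb
  have h := Functor.congr_obj (congrArg DLens.get <| Epi.left_cancellation
    (Z := LensCat.of (Cat.of (Glue F))) _ _ (comp_inclLens₁_eq_comp_inclLens₂ F)) b
  exact (congrArg Glue.second h).mpr hb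

end LensPaper

/-- Every lens that is both an epimorphism and a monomorphism
in `Lens` is an isomorphism. -/
theorem lens_epi_mono_isIso (A B : LensCat.{u}) (F : A ⟶ B)
    (hepi : Epi F) (hmono : Mono F) : IsIso F := by
  have hinj := injective_get_obj_of_mono F
  have := faithful_get_of_mono F
  have := DLens.full_get F hinj
  have : (DLens.get F).IsIso := { bijective_obj := ⟨hinj, surjective_get_obj_of_epi F⟩ }
  exact LensCat.isIso_of_isIso_get F
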